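/- Strict version: if Z_∼ and Z_≁ are independent ℕ-valued random variables with P(Z_∼ ≥ k) > P(Z_≁ ≥ k) for some k with P(Z_≁ = k') > 0 for some k' < k, and P(Z_∼ ≥ j) ≥ P(Z_≁ ≥ j) for all j, and moreover P(Z_∼ < j) ≤ P(Z_≁ < j) for all j with suitable strictness, then P(Z_∼ > Z_≁ | Z_∼ ≠ Z_≁) > 1/2. -/

import Mathlib

open MeasureTheory ProbabilityTheory
open scoped ENNReal

/-!
Conditioning on the value `i` of `Y`, independence gives `P(Y < X) = ∑ᵢ P(Y = i) P(i < X)` and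
`P(X < Y) = ∑ᵢ P(Y = i) P(X < i)`. Dominance lets `Y` replace `X` in both sums, lowering the
first and raising the second, and the two resulting sums agree: each is the probability that one
of two independent copies of `Y` lies below the other. Strict dominance at some `k` propagates
down to an atom `i` of `Y` with `P(i < Y) < P(i < X)`, so `P(X < Y) < P(Y < X)`.
-/

theorem ENNReal.tsum_mul_tsum_indicator_comm {α : Type*} (p : α → ℝ≥0∞) (r : α → α → Prop) :
    ∑' i, p i * ∑' j, {j | r j i}.indicator p j =
      ∑' i, p i * ∑' j, {j | r i j}.indicator p j := by
  simp_rw [← ENNReal.tsum_mul_left]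
  rw [ENNReal.tsum_comm]
  refine tsum_congr fun i => tsum_congr fun j => ?_
  by_cases h : r i j <;> simp [Set.indicator, h, mul_comm]

theorem ENNReal.half_lt_div_add_of_lt {a b : ℝ≥0∞} (hba : b < a) (ha : a ≠ ∞) :
    1 / 2 < a / (a + b) := by
  have hab : a + b ≠ ∞ := ENNReal.add_ne_top.mpr ⟨ha, hba.ne_top⟩
  rw [ENNReal.lt_div_iff_mul_lt (Or.inr (by norm_num)) (Or.inl hab)]
  calc 1 / 2 * (a + b) < 1 / 2 * (a + a) := by gcongr <;> norm_num
    _ = a := by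
      rw [← two_mul, ← mul_assoc, one_div, ENNReal.inv_mul_cancel two_ne_zero
        ENNReal.ofNat_ne_top, one_mul]

section

variable {Ω β : Type*} [MeasurableSpace Ω] {μ : Measure Ω}
  [MeasurableSpace β] [Countable β] [MeasurableSingletonClass β]

theorem measure_setOf_eq_tsum_indicator {Y : Ω → β} (hY : Measurable Y) (P : β → Prop) :
    μ {ω | P (Y ω)} = ∑' b, {b | P b}.indicator (fun b => μ {ω | Y ω = b}) b := by
  rw [← tsum_subtype]
  exact (tsum_measure_preimage_singleton (Set.to_countable _)
    fun b _ => hY (measurableSet_singleton b)).symm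

theorem tsum_measure_eq_mul_measure_rel_comm {Y : Ω → β} (hY : Measurable Y)
    (r : β → β → Prop) :
    ∑' b, μ {ω | Y ω = b} * μ {ω | r (Y ω) b} = ∑' b, μ {ω | Y ω = b} * μ {ω | r b (Y ω)} := by
  simpa only [← measure_setOf_eq_tsum_indicator hY] using
    ENNReal.tsum_mul_tsum_indicator_comm (fun b => μ {ω | Y ω = b}) r

theorem ProbabilityTheory.IndepFun.measure_setOf_rel_eq_tsum {γ : Type*} [MeasurableSpace γ]
    {X : Ω → γ} {Y : Ω → β} (hX : Measurable X) (hY : Measurable Y) (h : IndepFun X Y μ)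
    (r : β → γ → Prop) (hr : ∀ b, MeasurableSet {x | r b x}) :
    μ {ω | r (Y ω) (X ω)} = ∑' b, μ {ω | Y ω = b} * μ {ω | r b (X ω)} := by
  have hunion : {ω | r (Y ω) (X ω)} = ⋃ b, Y ⁻¹' {b} ∩ X ⁻¹' {x | r b x} := by
    ext ω
    simp
  have hdisj : Pairwise (Function.onFun Disjoint fun b => Y ⁻¹' {b} ∩ X ⁻¹' {x | r b x}) :=
    fun b c hbc => ((Set.disjoint_singleton.mpr hbc).preimage Y).mono
      Set.inter_subset_left Set.inter_subset_left
  rw [hunion, measure_iUnion hdisj fun b => (hY (measurableSet_singleton b)).inter (hX (hr b))]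
  exact tsum_congr fun b =>
    h.symm.measure_inter_preimage_eq_mul _ _ (measurableSet_singleton b) (hr b)

end

theorem measure_ne_eq_measure_lt_add_measure_lt {Ω α : Type*} [MeasurableSpace Ω]
    (μ : Measure Ω) [LinearOrder α] {X Y : Ω → α} (h : MeasurableSet {ω | X ω < Y ω}) :
    μ {ω | X ω ≠ Y ω} = μ {ω | Y ω < X ω} + μ {ω | X ω < Y ω} := by
  have hunion : {ω | X ω ≠ Y ω} = {ω | Y ω < X ω} ∪ {ω | X ω < Y ω} :=
    Set.ext fun _ => ne_iff_lt_or_gt.trans or_comm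
  rw [hunion]
  exact measure_union (Set.disjoint_left.mpr fun _ h₁ h₂ => lt_asymm h₁ h₂) h

theorem exists_measure_eq_pos_and_measure_lt_lt {Ω : Type*} [MeasurableSpace Ω]
    (μ : Measure Ω) {X Y : Ω → ℕ} {k : ℕ} (hk : μ {ω | k ≤ Y ω} < μ {ω | k ≤ X ω}) :
    ∃ i, 0 < μ {ω | Y ω = i} ∧ μ {ω | i < Y ω} < μ {ω | i < X ω} := by
  by_contra! h
  suffices ∀ n, μ {ω | n ≤ X ω} ≤ μ {ω | n ≤ Y ω} from (hk.trans_le (this k)).false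
  intro n
  induction n with
  | zero => simp
  | succ n ih =>
    rcases eq_zero_or_pos (μ {ω | Y ω = n}) with hn | hn
    · calc μ {ω | n + 1 ≤ X ω} ≤ μ {ω | n ≤ X ω} := measure_mono
            fun ω (hω : n + 1 ≤ X ω) => show n ≤ X ω by omega
        _ ≤ μ {ω | n ≤ Y ω} := ih
        _ ≤ μ ({ω | Y ω = n} ∪ {ω | n < Y ω}) := measure_mono
            fun ω (hω : n ≤ Y ω) => show Y ω = n ∨ n < Y ω by omega
        _ ≤ μ {ω | Y ω = n} + μ {ω | n < Y ω} := measure_union_le _ _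
        _ = μ {ω | n + 1 ≤ Y ω} := by rw [hn, zero_add]; rfl
    · exact h n hn

theorem auc_gt_half_of_strict_stoch_dom_general
    {Ω : Type*} [MeasurableSpace Ω] (μ : Measure Ω) [IsProbabilityMeasure μ]
    (X Y : Ω → ℕ) (hX : Measurable X) (hY : Measurable Y)
    (hindep : IndepFun X Y μ)
    (hdom : ∀ j : ℕ, μ {ω | j ≤ Y ω} ≤ μ {ω | j ≤ X ω})
    (hdom' : ∀ j : ℕ, μ {ω | X ω < j} ≤ μ {ω | Y ω < j})
    (hstrict : ∃ k : ℕ, μ {ω | k ≤ Y ω} < μ {ω | k ≤ X ω} ∧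
      ∃ k' : ℕ, k' < k ∧ 0 < μ {ω | Y ω = k'}) :
    1 / 2 < μ {ω | Y ω < X ω} / μ {ω | X ω ≠ Y ω} := by
  obtain ⟨k, hk, -⟩ := hstrict
  obtain ⟨i, hi_pos, hi_lt⟩ := exists_measure_eq_pos_and_measure_lt_lt μ hk
  have hA := hindep.measure_setOf_rel_eq_tsum hX hY (· < ·) fun _ => measurableSet_Ioi
  have hB := hindep.measure_setOf_rel_eq_tsum hX hY (fun j x => x < j) fun _ => measurableSet_Iio
  have hle : ∀ j, μ {ω | Y ω = j} * μ {ω | j < Y ω} ≤ μ {ω | Y ω = j} * μ {ω | j < X ω} :=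
    fun j => mul_le_mul_right (hdom (j + 1)) _
  have hfin : ∑' j, μ {ω | Y ω = j} * μ {ω | j < Y ω} ≠ ∞ :=
    ne_top_of_le_ne_top (hA ▸ measure_ne_top μ _) (ENNReal.tsum_le_tsum hle)
  have hBA : μ {ω | X ω < Y ω} < μ {ω | Y ω < X ω} := calc
    μ {ω | X ω < Y ω} = ∑' j, μ {ω | Y ω = j} * μ {ω | X ω < j} := hB
    _ ≤ ∑' j, μ {ω | Y ω = j} * μ {ω | Y ω < j} :=
        ENNReal.tsum_le_tsum fun j => mul_le_mul_right (hdom' j) _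
    _ = ∑' j, μ {ω | Y ω = j} * μ {ω | j < Y ω} := tsum_measure_eq_mul_measure_rel_comm hY _
    _ < ∑' j, μ {ω | Y ω = j} * μ {ω | j < X ω} :=
        ENNReal.tsum_lt_tsum hfin hle
          (ENNReal.mul_lt_mul_right hi_pos.ne' (measure_ne_top μ _) hi_lt)
    _ = μ {ω | Y ω < X ω} := hA.symm
  rw [measure_ne_eq_measure_lt_add_measure_lt μ (measurableSet_lt hX hY)]
  exact ENNReal.half_lt_div_add_of_lt hBA (measure_ne_top μ _)

/-- Strict version: if `Z∼` strictly stochastically dominates `Z≁` (the tail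
probabilities differ strictly at some `k` with probability mass of `Z≁` strictly
below `k`), then the AUC `P(Z∼ > Z≁ | Z∼ ≠ Z≁) > 1/2`. -/
theorem auc_gt_half_of_strict_stoch_dom
    {Ω : Type*} [MeasurableSpace Ω] (μ : Measure Ω) [IsProbabilityMeasure μ]
    (X Y : Ω → ℕ) (hX : Measurable X) (hY : Measurable Y)
    (hindep : IndepFun X Y μ)
    (hdom : ∀ j : ℕ, μ {ω | j ≤ Y ω} ≤ μ {ω | j ≤ X ω})
    (hdom' : ∀ j : ℕ, μ {ω | X ω < j} ≤ μ {ω | Y ω < j})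
    (hstrict : ∃ k : ℕ, μ {ω | k ≤ Y ω} < μ {ω | k ≤ X ω} ∧
      ∃ k' : ℕ, k' < k ∧ 0 < μ {ω | Y ω = k'})
    (hne : 0 < μ {ω | X ω ≠ Y ω}) :
    1 / 2 < μ {ω | Y ω < X ω} / μ {ω | X ω ≠ Y ω} :=
  auc_gt_half_of_strict_stoch_dom_general μ X Y hX hY hindep hdom hdom' hstrict
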